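/- Let U, V, D be complex Hilbert spaces, S : U → D a bounded linear operator that is coercive (there exists C_* > 0 with C_*‖u‖ ≤ ‖Su‖ for all u ∈ U), T : U → V a bounded linear operator, and d ∈ D. For α ≥ 0 define J_α(u) = (1/2)(‖Su − d‖²_D + α²‖Tu‖²_V), let u_α ∈ U be the unique solution of the normal equation (S*S + α²T*T)u_α = S*d, and set J̃_α = J_α(u_α), which is the minimum of J_α over U. Then lim_{α → 0⁺} (J̃_α − J̃_0)/α² = (1/2)‖Tu_0‖²_V. -/

import Mathlib

/-!
A solution `e` of the normal equation for `α` makes the cross term vanish in the expansion of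
`J_α (e + w)`, so `J_α (e + w) = J_α e + ½ (‖S w‖² + α² ‖T w‖²)` and `e` minimizes `J_α`.
Comparing `u_α` with `u_0` in `J_0` and in `J_α` traps the difference quotient between
`½ ‖T u_α‖²` and `½ ‖T u_0‖²`. Testing the difference of the two normal equations against
`u_α - u_0` and using coercivity gives `‖u_α - u_0‖ = O(α²)`, so both bounds tend to `½ ‖T u_0‖²`.
-/

open ContinuousLinearMap Filter Topology RCLike
open scoped InnerProductSpace

section Tikhonov

variable {𝕜 U V D : Type*} [RCLike 𝕜]
  [NormedAddCommGroup U] [InnerProductSpace 𝕜 U] [CompleteSpace U]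
  [NormedAddCommGroup V] [InnerProductSpace 𝕜 V] [CompleteSpace V]
  [NormedAddCommGroup D] [InnerProductSpace 𝕜 D] [CompleteSpace D]
  (S : U →L[𝕜] D) (T : U →L[𝕜] V) (d : D)

noncomputable def tikhonovFunctional (α : ℝ) (x : U) : ℝ :=
  (1 / 2) * (‖S x - d‖ ^ 2 + α ^ 2 * ‖T x‖ ^ 2)

variable {S T d}

theorem re_inner_add_sq_mul_re_inner_eq_zero_of_normal_eq {α : ℝ} {e : U}
    (he : adjoint S (S e) + (α : 𝕜) ^ 2 • adjoint T (T e) = adjoint S d) (w : U) :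
    re ⟪S e - d, S w⟫_𝕜 + α ^ 2 * re ⟪T e, T w⟫_𝕜 = 0 := by
  have hres : adjoint S (S e - d) + ((α ^ 2 : ℝ) : 𝕜) • adjoint T (T e) = 0 := by
    rw [map_sub, sub_add_eq_add_sub, ofReal_pow, he, sub_self]
  have h := congrArg (fun v => re ⟪v, w⟫_𝕜) hres
  simpa only [inner_add_left, inner_smul_left, adjoint_inner_left, map_add, inner_zero_left,
    conj_ofReal, re_ofReal_mul, map_zero] using h

theorem tikhonovFunctional_add_of_normal_eq {α : ℝ} {e : U}
    (he : adjoint S (S e) + (α : 𝕜) ^ 2 • adjoint T (T e) = adjoint S d) (w : U) :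
    tikhonovFunctional S T d α (e + w) =
      tikhonovFunctional S T d α e + (1 / 2) * (‖S w‖ ^ 2 + α ^ 2 * ‖T w‖ ^ 2) := by
  have hS : ‖S (e + w) - d‖ ^ 2 =
      ‖S e - d‖ ^ 2 + 2 * re ⟪S e - d, S w⟫_𝕜 + ‖S w‖ ^ 2 := by
    rw [map_add, add_sub_right_comm, norm_add_sq (𝕜 := 𝕜)]
  have hT : ‖T (e + w)‖ ^ 2 = ‖T e‖ ^ 2 + 2 * re ⟪T e, T w⟫_𝕜 + ‖T w‖ ^ 2 := by
    rw [map_add, norm_add_sq (𝕜 := 𝕜)]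
  have hcross := re_inner_add_sq_mul_re_inner_eq_zero_of_normal_eq he w
  simp only [tikhonovFunctional, hS, hT]
  linear_combination hcross

theorem tikhonovFunctional_le_of_normal_eq {α : ℝ} {e : U}
    (he : adjoint S (S e) + (α : 𝕜) ^ 2 • adjoint T (T e) = adjoint S d) (x : U) :
    tikhonovFunctional S T d α e ≤ tikhonovFunctional S T d α x := by
  have h := tikhonovFunctional_add_of_normal_eq he (x - e)
  rw [add_sub_cancel] at h
  rw [h]
  have : 0 ≤ ‖S (x - e)‖ ^ 2 + α ^ 2 * ‖T (x - e)‖ ^ 2 := by positivity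
  linarith

theorem norm_sub_le_of_normal_eq {C α : ℝ} (hC : 0 < C) (hS : ∀ x, C * ‖x‖ ≤ ‖S x‖) {e₀ e : U}
    (he₀ : adjoint S (S e₀) = adjoint S d)
    (he : adjoint S (S e) + (α : 𝕜) ^ 2 • adjoint T (T e) = adjoint S d) :
    ‖e - e₀‖ ≤ α ^ 2 * (‖T‖ * ‖T e₀‖ / C ^ 2) := by
  set w := e - e₀
  have hcross₀ := re_inner_add_sq_mul_re_inner_eq_zero_of_normal_eq (α := 0) (T := T)
    (by simpa using he₀) w
  have hcross := re_inner_add_sq_mul_re_inner_eq_zero_of_normal_eq he w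
  have hSe : S e - d = (S e₀ - d) + S w := by simp [w]
  have hTe : T e = T e₀ + T w := by simp [w]
  rw [hSe, hTe, inner_add_left, inner_add_left, map_add, map_add, inner_self_eq_norm_sq,
    inner_self_eq_norm_sq] at hcross
  have henergy : ‖S w‖ ^ 2 + α ^ 2 * ‖T w‖ ^ 2 = α ^ 2 * -re ⟪T e₀, T w⟫_𝕜 := by
    linear_combination hcross - hcross₀
  have hcross_le : -re ⟪T e₀, T w⟫_𝕜 ≤ ‖T e₀‖ * (‖T‖ * ‖w‖) :=
    (neg_le_abs _).trans ((abs_re_le_norm _).trans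
      ((norm_inner_le_norm _ _).trans (by gcongr; exact T.le_opNorm w)))
  have key : C ^ 2 * ‖w‖ ^ 2 ≤ α ^ 2 * (‖T‖ * ‖T e₀‖) * ‖w‖ :=
    calc C ^ 2 * ‖w‖ ^ 2 = (C * ‖w‖) ^ 2 := by ring
      _ ≤ ‖S w‖ ^ 2 := by gcongr; exact hS w
      _ ≤ ‖S w‖ ^ 2 + α ^ 2 * ‖T w‖ ^ 2 := by simp only [le_add_iff_nonneg_right]; positivity
      _ = α ^ 2 * -re ⟪T e₀, T w⟫_𝕜 := henergy
      _ ≤ α ^ 2 * (‖T e₀‖ * (‖T‖ * ‖w‖)) := by gcongr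
      _ = α ^ 2 * (‖T‖ * ‖T e₀‖) * ‖w‖ := by ring
  rw [← mul_div_assoc, le_div_iff₀ (by positivity)]
  rcases (norm_nonneg w).eq_or_lt with hw | hw
  · rw [← hw, zero_mul]; positivity
  · exact le_of_mul_le_mul_right (by linarith) hw

theorem tendsto_nhds_zero_of_normal_eq {C : ℝ} (hC : 0 < C) (hS : ∀ x, C * ‖x‖ ≤ ‖S x‖)
    {u : ℝ → U} (hu : ∀ α : ℝ, adjoint S (S (u α)) + (α : 𝕜) ^ 2 • adjoint T (T (u α)) =
      adjoint S d) :
    Tendsto u (𝓝 0) (𝓝 (u 0)) := by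
  have hu₀ : adjoint S (S (u 0)) = adjoint S d := by simpa using hu 0
  rw [← tendsto_sub_nhds_zero_iff]
  refine squeeze_zero_norm (fun α => norm_sub_le_of_normal_eq hC hS hu₀ (hu α)) ?_
  simpa using ((continuous_pow 2).tendsto (0 : ℝ)).mul_const (‖T‖ * ‖T (u 0)‖ / C ^ 2)

end Tikhonov

/-- Let `U, V, D` be complex Hilbert spaces, `S : U → D` bounded and
coercive (`C_*‖u‖ ≤ ‖S u‖` for some `C_* > 0`), `T : U → V` bounded, `d ∈ D`. For `α ≥ 0`
let `u_α` solve the normal equation `(S*S + α²T*T)u_α = S*d`, and let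
`J̃_α = (1/2)(‖S u_α − d‖² + α²‖T u_α‖²)` be the minimum of the penalized functional. Then
`lim_{α → 0⁺} (J̃_α − J̃_0)/α² = (1/2)‖T u_0‖²`. -/
theorem penalty_limit_of_tikhonov_homotopy
    {U V D : Type*}
    [NormedAddCommGroup U] [InnerProductSpace ℂ U] [CompleteSpace U]
    [NormedAddCommGroup V] [InnerProductSpace ℂ V] [CompleteSpace V]
    [NormedAddCommGroup D] [InnerProductSpace ℂ D] [CompleteSpace D]
    (S : U →L[ℂ] D) (T : U →L[ℂ] V) (d : D)
    (Cstar : ℝ) (hCstar : 0 < Cstar) (hcoercive : ∀ x : U, Cstar * ‖x‖ ≤ ‖S x‖)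
    (u : ℝ → U)
    (hu : ∀ α : ℝ, (adjoint S) (S (u α)) + (α ^ 2) • (adjoint T) (T (u α)) =
      (adjoint S) d) :
    Tendsto
      (fun α : ℝ =>
        ((1 / 2) * (‖S (u α) - d‖ ^ 2 + α ^ 2 * ‖T (u α)‖ ^ 2)
          - (1 / 2) * ‖S (u 0) - d‖ ^ 2) / α ^ 2)
      (nhdsWithin 0 (Set.Ioi 0)) (nhds ((1 / 2) * ‖T (u 0)‖ ^ 2)) := by
  have hnormal : ∀ α : ℝ, adjoint S (S (u α)) + (α : ℂ) ^ 2 • adjoint T (T (u α)) =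
      adjoint S d := fun α => by
    rw [← Complex.ofReal_pow, Complex.coe_smul]; exact hu α
  have hlim : Tendsto (fun α => (1 / 2) * ‖T (u α)‖ ^ 2) (𝓝[>] 0)
      (𝓝 ((1 / 2) * ‖T (u 0)‖ ^ 2)) :=
    ((continuous_const.mul (T.continuous.norm.pow 2)).tendsto (u 0)).comp
      ((tendsto_nhds_zero_of_normal_eq hCstar hcoercive hnormal).mono_left nhdsWithin_le_nhds)
  refine tendsto_of_tendsto_of_tendsto_of_le_of_le' hlim tendsto_const_nhds ?_ ?_ <;>
    filter_upwards [self_mem_nhdsWithin] with α (hα : 0 < α)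
  · have h₀ := tikhonovFunctional_le_of_normal_eq (hnormal 0) (u α)
    simp only [tikhonovFunctional] at h₀
    rw [le_div_iff₀ (by positivity)]
    linarith
  · have hα := tikhonovFunctional_le_of_normal_eq (hnormal α) (u 0)
    simp only [tikhonovFunctional] at hα
    rw [div_le_iff₀ (by positivity)]
    linarith
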